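/- Let 𝔣_r be the free 2-step nilpotent Lie algebra of rank r. If r ≡ 0 (mod 4), then any complex structure on 𝔣_r is 2-step. If r ≡ 3 (mod 4), then any complex structure J on 𝔣_r is 3-step, and moreover 𝔷∩J𝔷 has codimension 1 in 𝔷. -/

import Mathlib

open ExteriorAlgebra

/-- The commutator ideal `𝔫' = [𝔫,𝔫]`. -/
def commutatorIdeal (L : Type*) [LieRing L] [LieAlgebra ℝ L] : LieIdeal ℝ L :=
  ⁅(⊤ : LieIdeal ℝ L), (⊤ : LieIdeal ℝ L)⁆

/-- A complex structure on a real Lie algebra: `J² = -1` and vanishing Nijenhuis tensor. -/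
def IsComplexStructure {L : Type*} [LieRing L] [LieAlgebra ℝ L] (J : L →ₗ[ℝ] L) : Prop :=
  (∀ x : L, J (J x) = -x) ∧
    ∀ x y : L, ⁅x, y⁆ + J (⁅J x, y⁆ + ⁅x, J y⁆) - ⁅J x, J y⁆ = 0

lemma wedge_mem {V : Type*} [AddCommGroup V] [Module ℝ V] (v w : V) :
    ι ℝ v * ι ℝ w ∈ ⋀[ℝ]^2 V := by
  show ι ℝ v * ι ℝ w ∈ LinearMap.range (ι ℝ : V →ₗ[ℝ] ExteriorAlgebra ℝ V) ^ 2
  rw [pow_two]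
  exact Submodule.mul_mem_mul (LinearMap.mem_range_self _ v) (LinearMap.mem_range_self _ w)

lemma even_finrank_of_sq_eq_neg_one {E : Type*} [AddCommGroup E] [Module ℝ E]
    [FiniteDimensional ℝ E] (f : E →ₗ[ℝ] E) (hf : ∀ x, f (f x) = -x) :
    Even (Module.finrank ℝ E) := by
  have h1 : f ∘ₗ f = (-1 : ℝ) • LinearMap.id := by
    ext x; simp [hf x]
  have h2 : LinearMap.det f * LinearMap.det f = (-1 : ℝ) ^ Module.finrank ℝ E := by
    rw [← LinearMap.det_comp, h1, LinearMap.det_smul, LinearMap.det_id, mul_one]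
  rcases Nat.even_or_odd (Module.finrank ℝ E) with h | h
  · exact h
  · exfalso
    rw [h.neg_one_pow] at h2
    nlinarith [mul_self_nonneg (LinearMap.det f)]

lemma wedge_ne_zero {M : Type*} [AddCommGroup M] [Module ℝ M] {v w : M}
    (h : LinearIndependent ℝ ![v, w]) : ι ℝ v * ι ℝ w ≠ 0 := by
  classical
  set p : Submodule ℝ M := Submodule.span ℝ (Set.range ![v, w]) with hp
  let b : Module.Basis (Fin 2) ℝ p := Module.Basis.span h
  obtain ⟨q, hq⟩ := Submodule.exists_isCompl p
  let π := Submodule.projectionOnto p q hq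
  let f : M →ₗ[ℝ] ℝ := b.coord 0 ∘ₗ π
  let g : M →ₗ[ℝ] ℝ := b.coord 1 ∘ₗ π
  have hπv : π v = b 0 := by
    have h0 : (b 0 : M) = v := congrArg Subtype.val (Module.Basis.span_apply h 0)
    have h1 : π v = π ((b 0 : M)) := by rw [h0]
    rw [h1]
    exact Submodule.projectionOnto_apply_left hq (b 0)
  have hπw : π w = b 1 := by
    have h0 : (b 1 : M) = w := congrArg Subtype.val (Module.Basis.span_apply h 1)
    have h1 : π w = π ((b 1 : M)) := by rw [h0]
    rw [h1]
    exact Submodule.projectionOnto_apply_left hq (b 1)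
  have hfv : f v = 1 := by simp [f, hπv]
  have hfw : f w = 0 := by simp [f, hπw]
  have hgv : g v = 0 := by simp [g, hπv]
  have hgw : g w = 1 := by simp [g, hπw]
  let ρ : M →ₗ[ℝ] (Fin 2 → ℝ) := LinearMap.pi ![f, g]
  let ω : M [⋀^Fin 2]→ₗ[ℝ] ℝ := Matrix.detRowAlternating.compLinearMap ρ
  have hω : ω ![v, w] = 1 := by
    have : ω ![v, w] = Matrix.det (Matrix.of fun i j => ρ (![v, w] i) j) := rfl
    rw [this, Matrix.det_fin_two]
    simp [ρ, hfv, hfw, hgv, hgw]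
  let F := liftAlternating (R := ℝ) (M := M) (N := ℝ)
    (fun n => match n with | 2 => ω | _ => 0)
  have hmulti : ιMulti ℝ 2 ![v, w] = ι ℝ v * ι ℝ w := by
    simp [ιMulti_apply, List.ofFn_succ]
  intro hcontra
  have : F (ι ℝ v * ι ℝ w) = 1 := by
    rw [← hmulti, liftAlternating_apply_ιMulti]
    exact hω
  rw [hcontra, map_zero] at this
  exact one_ne_zero this.symm

lemma mem_span_of_wedge_zero {M : Type*} [AddCommGroup M] [Module ℝ M] {v w : M}
    (hv : v ≠ 0) (h : ι ℝ w * ι ℝ v = 0) : w ∈ Submodule.span ℝ {v} := by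
  by_contra hw
  refine wedge_ne_zero ?_ h
  rw [linearIndependent_fin2]
  refine ⟨by simpa using hv, fun a ha => ?_⟩
  exact hw (Submodule.mem_span_singleton.2 ⟨a, by simpa using ha⟩)

/-- on the free 2-step nilpotent Lie algebra `𝔣_r = V ⊕ Λ²V`
(here `L` with complement `V` of the commutator `C = 𝔷`, the bracket inducing a linear
equivalence `Λ²V ≃ C`): if `r ≡ 0 (mod 4)` every complex structure is 2-step, and if
`r ≡ 3 (mod 4)` every complex structure `J` is 3-step with `𝔷 ∩ J𝔷` of codimension 1
in `𝔷`. -/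
theorem free_two_step_complex_structures
    {L : Type*} [LieRing L] [LieAlgebra ℝ L] [FiniteDimensional ℝ L]
    (r : ℕ) (V : Submodule ℝ L) (hVr : Module.finrank ℝ V = r)
    (hdisj : V ⊓ (commutatorIdeal L : Submodule ℝ L) = ⊥)
    (hsup : V ⊔ (commutatorIdeal L : Submodule ℝ L) = ⊤)
    (hcenter : (LieAlgebra.center ℝ L : Submodule ℝ L) =
      (commutatorIdeal L : Submodule ℝ L))
    (hfree : ∃ e : (⋀[ℝ]^2 (↥V)) ≃ₗ[ℝ] ↥(commutatorIdeal L : Submodule ℝ L),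
      ∀ v w : V, (e ⟨ι ℝ v * ι ℝ w, wedge_mem v w⟩ : L) = ⁅(v : L), (w : L)⁆) :
    (r % 4 = 0 → ∀ J : L →ₗ[ℝ] L, IsComplexStructure J →
        Submodule.map J (commutatorIdeal L : Submodule ℝ L) ≤
          (LieAlgebra.center ℝ L : Submodule ℝ L)) ∧
      (r % 4 = 3 → ∀ J : L →ₗ[ℝ] L, IsComplexStructure J →
        ¬ Submodule.map J (commutatorIdeal L : Submodule ℝ L) ≤
            (LieAlgebra.center ℝ L : Submodule ℝ L) ∧
          Module.finrank ℝ
              ((LieAlgebra.center ℝ L : Submodule ℝ L) ⊓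
                  Submodule.map J (LieAlgebra.center ℝ L : Submodule ℝ L) :
                Submodule ℝ L) + 1 =
            Module.finrank ℝ (LieAlgebra.center ℝ L : Submodule ℝ L)) := by
  classical
  set Z : Submodule ℝ L := (commutatorIdeal L : Submodule ℝ L) with hZdef
  obtain ⟨e, he⟩ := hfree
  -- elements of Z are central
  have hZc : ∀ z ∈ Z, ∀ x : L, ⁅x, z⁆ = 0 := by
    intro z hz x
    have hz' : z ∈ (LieAlgebra.center ℝ L : Submodule ℝ L) := by
      rw [hcenter]; exact hz
    have hz'' : z ∈ LieAlgebra.center ℝ L := hz'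
    exact (LieModule.mem_maxTrivSubmodule ℝ L L z).1 hz'' x
  have hZc' : ∀ z ∈ Z, ∀ x : L, ⁅z, x⁆ = 0 := fun z hz x => by
    rw [← lie_skew, hZc z hz x, neg_zero]
  have hc : IsCompl V Z := ⟨disjoint_iff.2 hdisj, codisjoint_iff.2 hsup⟩
  set pV := Submodule.projectionOnto V Z hc with hpVdef
  have hsub : ∀ x : L, x - (pV x : L) ∈ Z := by
    intro x
    have h0 := Submodule.projection_add_projection_eq_self hc x
    have h1 : x - (pV x : L) = ((Submodule.projectionOnto Z V hc.symm x : L)) := by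
      rw [eq_comm, eq_sub_iff_add_eq, add_comm]; exact h0
    rw [h1]
    exact (Submodule.projectionOnto Z V hc.symm x).2
  have hpVZ : ∀ z ∈ Z, pV z = 0 := fun z hz =>
    Submodule.projectionOnto_apply_of_mem_right hc hz
  -- brackets only depend on the V-components
  have hbr : ∀ x y : L, ⁅x, y⁆ = ⁅(pV x : L), (pV y : L)⁆ := by
    intro x y
    have hx : x = (pV x : L) + (x - (pV x : L)) := by abel
    have hy : y = (pV y : L) + (y - (pV y : L)) := by abel
    conv_lhs => rw [hx, hy]
    rw [add_lie, lie_add, lie_add, hZc _ (hsub y) _, hZc _ (hsub y) _,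
      hZc' _ (hsub x) _]
    abel
  -- dim L = dim V + dim Z
  have hdimL : Module.finrank ℝ V + Module.finrank ℝ Z = Module.finrank ℝ L := by
    have := Submodule.finrank_sup_add_finrank_inf_eq V Z
    rw [hsup, hdisj, finrank_bot, finrank_top, add_zero] at this
    exact this.symm
  -- the per-J analysis
  have key : ∀ J : L →ₗ[ℝ] L, IsComplexStructure J →
      ∃ s : ℕ, s ≤ 1 ∧
        (s = 0 ↔ Submodule.map J Z ≤ Z) ∧
        Module.finrank ℝ (Z ⊓ Submodule.map J Z : Submodule ℝ L) + s =
          Module.finrank ℝ Z ∧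
        Even (Module.finrank ℝ (Z ⊓ Submodule.map J Z : Submodule ℝ L)) ∧
        Even (Module.finrank ℝ L) := by
    intro J hJ
    -- key wedge vanishing
    have hkey : ∀ z z' : L, z ∈ Z → z' ∈ Z →
        ⁅(pV (J z) : L), (pV (J z') : L)⁆ = 0 := by
      intro z z' hz hz'
      have h0 := hJ.2 z z'
      rw [hZc' z hz z', hZc z' hz' (J z), hZc' z hz (J z'), add_zero, map_zero,
        add_zero, zero_sub, neg_eq_zero] at h0
      rw [← hbr]; exact h0
    -- the V-part of J Z
    set Slin : ↥Z →ₗ[ℝ] L := V.subtype ∘ₗ pV ∘ₗ J ∘ₗ Z.subtype with hSlin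
    set S : Submodule ℝ L := LinearMap.range Slin with hSdef
    have hSV : S ≤ V := by
      rintro x ⟨z, rfl⟩
      exact (pV (J z)).2
    have hwedge0 : ∀ z z' : ↥Z,
        ι ℝ (pV (J (z : L))) * ι ℝ (pV (J (z' : L))) = 0 := by
      intro z z'
      have h1 : (e ⟨ι ℝ (pV (J (z : L))) * ι ℝ (pV (J (z' : L))), wedge_mem _ _⟩ : L)
          = 0 := by
        rw [he]; exact hkey _ _ z.2 z'.2
      have h2 : e ⟨ι ℝ (pV (J (z : L))) * ι ℝ (pV (J (z' : L))), wedge_mem _ _⟩ = 0 :=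
        Subtype.ext h1
      have h3 := e.map_eq_zero_iff.1 h2
      exact congrArg Subtype.val h3
    -- dim S ≤ 1
    have hS1 : Module.finrank ℝ S ≤ 1 := by
      by_cases hbot : S = ⊥
      · rw [hbot, finrank_bot]; omega
      · obtain ⟨v, hvS, hv0⟩ := (Submodule.ne_bot_iff S).1 hbot
        obtain ⟨z₀, hz₀⟩ := hvS
        have hle : S ≤ Submodule.span ℝ {v} := by
          rintro x ⟨z', rfl⟩
          have hb0 : (pV (J (z₀ : L)) : ↥V) ≠ 0 := by
            intro hcon
            apply hv0
            rw [← hz₀]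
            show (V.subtype) (pV (J (z₀ : L))) = 0
            rw [hcon, map_zero]
          have hmem := mem_span_of_wedge_zero hb0 (hwedge0 z' z₀)
          obtain ⟨c, hcv⟩ := Submodule.mem_span_singleton.1 hmem
          refine Submodule.mem_span_singleton.2 ⟨c, ?_⟩
          rw [← hz₀]
          show c • (V.subtype (pV (J (z₀ : L)))) = V.subtype (pV (J (z' : L)))
          rw [← map_smul, hcv]
        calc Module.finrank ℝ S ≤ Module.finrank ℝ (Submodule.span ℝ {v}) :=
              Submodule.finrank_mono hle
          _ = 1 := finrank_span_singleton hv0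
    -- Z ⊔ J Z = Z ⊔ S
    have hsupS : Z ⊔ Submodule.map J Z = Z ⊔ S := by
      apply le_antisymm
      · refine sup_le le_sup_left ?_
        rintro x ⟨z, hz, rfl⟩
        have h1 : J z = (pV (J z) : L) + (J z - (pV (J z) : L)) := by abel
        rw [h1]
        exact add_mem (Submodule.mem_sup_right ⟨⟨z, hz⟩, rfl⟩)
          (Submodule.mem_sup_left (hsub (J z)))
      · refine sup_le le_sup_left ?_
        rintro x ⟨z, rfl⟩
        show ((pV (J (z : L)) : L)) ∈ Z ⊔ Submodule.map J Z
        have h1 : (pV (J (z : L)) : L) = J (z : L) - (J (z : L) - (pV (J (z : L)) : L)) := by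
          abel
        rw [h1]
        exact sub_mem (Submodule.mem_sup_right ⟨(z : L), z.2, rfl⟩)
          (Submodule.mem_sup_left (hsub _))
    -- J is bijective
    have hJJ : ∀ x : L, J (J x) = -x := hJ.1
    let Jeq : L ≃ₗ[ℝ] L :=
      LinearEquiv.ofLinear J (-J)
        (by ext x; simp [hJJ x]) (by ext x; simp [hJJ x])
    have hrank_map : Module.finrank ℝ (Submodule.map J Z : Submodule ℝ L) =
        Module.finrank ℝ Z := by
      have : Submodule.map J Z = Submodule.map (Jeq : L →ₗ[ℝ] L) Z := rfl
      rw [this, LinearEquiv.finrank_map_eq]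
    -- rank counting
    have hinfS : Z ⊓ S = ⊥ := by
      rw [← le_bot_iff, ← hdisj]
      exact le_inf (inf_le_right.trans hSV) inf_le_left
    have count1 := Submodule.finrank_sup_add_finrank_inf_eq Z (Submodule.map J Z)
    have count2 := Submodule.finrank_sup_add_finrank_inf_eq Z S
    rw [hinfS, finrank_bot, add_zero] at count2
    rw [hsupS, count2, hrank_map] at count1
    -- W is J-invariant and of even dimension
    have hWinv : ∀ x ∈ (Z ⊓ Submodule.map J Z : Submodule ℝ L),
        J x ∈ (Z ⊓ Submodule.map J Z : Submodule ℝ L) := by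
      rintro x ⟨hxZ, y, hyZ, rfl⟩
      refine ⟨?_, Submodule.mem_map_of_mem hxZ⟩
      rw [hJJ y]
      exact neg_mem hyZ
    have hWeven : Even (Module.finrank ℝ (Z ⊓ Submodule.map J Z : Submodule ℝ L)) := by
      refine even_finrank_of_sq_eq_neg_one (J.restrict hWinv) fun x => ?_
      ext
      simp [LinearMap.restrict_apply, hJJ]
    have hLeven : Even (Module.finrank ℝ L) :=
      even_finrank_of_sq_eq_neg_one J hJJ
    refine ⟨Module.finrank ℝ S, hS1, ?_, by omega, hWeven, hLeven⟩
    constructor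
    · intro hs0
      have hSbot : S = ⊥ := by
        rw [← Submodule.finrank_eq_zero]; exact hs0
      rintro x ⟨z, hz, rfl⟩
      have h2 : (pV (J z) : L) ∈ S := ⟨⟨z, hz⟩, rfl⟩
      rw [hSbot, Submodule.mem_bot] at h2
      have h3 := hsub (J z)
      rwa [h2, sub_zero] at h3
    · intro hle
      have hSbot : S = ⊥ := by
        rw [eq_bot_iff]
        rintro x ⟨z, rfl⟩
        have hJz : J (z : L) ∈ Z := hle (Submodule.mem_map_of_mem z.2)
        show ((pV (J (z : L)) : L)) ∈ (⊥ : Submodule ℝ L)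
        rw [hpVZ _ hJz]
        simp
      rw [hSbot]
      exact finrank_bot ℝ L
  constructor
  · intro hr J hJ
    obtain ⟨s, hs1, hs0iff, hcount, hWeven, hLeven⟩ := key J hJ
    have hreven : r % 2 = 0 := by omega
    have hzparity : Even (Module.finrank ℝ Z) := by
      rw [Nat.even_iff] at hLeven ⊢
      rw [hVr] at hdimL
      omega
    have hs0 : s = 0 := by
      rw [Nat.even_iff] at hzparity hWeven
      omega
    rw [hcenter]
    exact hs0iff.1 hs0
  · intro hr J hJ
    obtain ⟨s, hs1, hs0iff, hcount, hWeven, hLeven⟩ := key J hJ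
    have hrodd : r % 2 = 1 := by omega
    have hzodd : ¬ Even (Module.finrank ℝ Z) := by
      rw [Nat.even_iff] at hLeven ⊢
      rw [hVr] at hdimL
      omega
    have hs1' : s = 1 := by
      rw [Nat.even_iff] at hWeven
      rw [Nat.even_iff] at hzodd
      omega
    constructor
    · rw [hcenter]
      intro hle
      have := hs0iff.2 hle
      omega
    · rw [hcenter]
      omega
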